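/- There is an absolute constant C > 0 such that the following holds. Let n, p, m ∈ ℕ, s, r ∈ {1,…,n} with r ≤ s and 2s ≤ n, and δ, δ' ∈ (0,1). Let A'_1,…,A'_m ∈ ℝ^{p×p} define the linear map 𝒜' : ℝ^{p×p} → ℝ^m, 𝒜'(M)_i = ⟨A'_i, M⟩_F, and suppose (1−δ')‖Z‖_F ≤ ‖𝒜'(Z)‖₁ ≤ (1+δ')‖Z‖_F for every Z ∈ ℝ^{p×p} with rank(Z) ≤ 2r. Let B, C ∈ ℝ^{p×n} each satisfy the restricted isometry property of order 2s with constant δ, i.e., (1−δ)‖z‖₂² ≤ ‖Dz‖₂² ≤ (1+δ)‖z‖₂² for every 2s-sparse z ∈ ℝⁿ and D ∈ {B, C}. Let X ∈ b̃ilr(s,r), let y_i = sgn(⟨Bᵀ A'_i C, X⟩_F) for i = 1,…,m, and define X' := H^col_(s){ H^row_(s)[ Bᵀ H^{[r]}(𝒜'*(y)) ] · C }, where 𝒜'*(v) = Σ_i v_i A'_i, H^{[r]} is any best rank-r approximation (keeping r leading singular elements), and H^row_(s) (resp. H^col_(s)) is any best approximation by s-row-sparse (resp. s-column-sparse) matrices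 obtained by keeping the s rows (resp. columns) of largest ℓ₂ norm. Then ‖X − X'‖_F ≤ C(√δ' + δ). -/

import Mathlib

open MeasureTheory ProbabilityTheory Matrix

noncomputable section

/-- Frobenius inner product of two real matrices. -/
def frobInner {a b : ℕ} (X Y : Matrix (Fin a) (Fin b) ℝ) : ℝ :=
  ∑ i, ∑ j, X i j * Y i j

/-- Frobenius norm of a real matrix. -/
def frobNorm {a b : ℕ} (X : Matrix (Fin a) (Fin b) ℝ) : ℝ :=
  Real.sqrt (∑ i, ∑ j, (X i j) ^ 2)

/-- Sign function with values in {−1, 1}. -/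
def sgn (x : ℝ) : ℝ := if x < 0 then -1 else 1

/-- The set of matrices of rank at most `r` supported on a set `S × T` with `|S| = |T| = s`. -/
def bilr (n s r : ℕ) : Set (Matrix (Fin n) (Fin n) ℝ) :=
  {X | X.rank ≤ r ∧ ∃ S T : Finset (Fin n), S.card = s ∧ T.card = s ∧
      ∀ i j, X i j ≠ 0 → i ∈ S ∧ j ∈ T}

/-- The intersection of `bilr n s r` with the Frobenius unit sphere. -/
def bilrSphere (n s r : ℕ) : Set (Matrix (Fin n) (Fin n) ℝ) :=
  {X | X ∈ bilr n s r ∧ frobNorm X = 1}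

/-- A vector is `s`-sparse if its support is contained in a set of size at most `s`. -/
def SparseVec {n : ℕ} (s : ℕ) (z : Fin n → ℝ) : Prop :=
  ∃ S : Finset (Fin n), S.card ≤ s ∧ ∀ i, z i ≠ 0 → i ∈ S

/-- A matrix is `s`-row-sparse if its nonzero rows are indexed by a set of size at most `s`. -/
def RowSparse {n k : ℕ} (s : ℕ) (Z : Matrix (Fin n) (Fin k) ℝ) : Prop :=
  ∃ S : Finset (Fin n), S.card ≤ s ∧ ∀ i, (∃ j, Z i j ≠ 0) → i ∈ S

/-- A matrix is `s`-column-sparse if its nonzero columns are indexed by a set of size ≤ `s`. -/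
def ColSparse {n k : ℕ} (s : ℕ) (Z : Matrix (Fin n) (Fin k) ℝ) : Prop :=
  ∃ T : Finset (Fin k), T.card ≤ s ∧ ∀ j, (∃ i, Z i j ≠ 0) → j ∈ T

/-- `D` satisfies the restricted isometry property of order `t` with constant `δ`. -/
def RIP {p n : ℕ} (t : ℕ) (δ : ℝ) (D : Matrix (Fin p) (Fin n) ℝ) : Prop :=
  ∀ z : Fin n → ℝ, SparseVec t z →
    (1 - δ) * (∑ i, (z i) ^ 2) ≤ (∑ i, (D.mulVec z i) ^ 2) ∧
    (∑ i, (D.mulVec z i) ^ 2) ≤ (1 + δ) * (∑ i, (z i) ^ 2)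

section AuxLemmas

variable {a b k p n : ℕ}

/-! ### Basic facts about `frobInner` and `frobNorm` -/

lemma prodSum (g : Fin a → Fin b → ℝ) :
    ∑ q : Fin a × Fin b, g q.1 q.2 = ∑ i, ∑ j, g i j := by
  rw [Fintype.sum_prod_type]

lemma frobInner_self_eq (X : Matrix (Fin a) (Fin b) ℝ) :
    frobInner X X = ∑ i, ∑ j, (X i j) ^ 2 := by
  simp [frobInner, sq]

lemma frobNorm_eq (X : Matrix (Fin a) (Fin b) ℝ) :
    frobNorm X = Real.sqrt (frobInner X X) := by rw [frobInner_self_eq]; rfl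

lemma frobInner_self_nonneg (X : Matrix (Fin a) (Fin b) ℝ) : 0 ≤ frobInner X X := by
  rw [frobInner_self_eq]; positivity

lemma frobNorm_nonneg (X : Matrix (Fin a) (Fin b) ℝ) : 0 ≤ frobNorm X :=
  Real.sqrt_nonneg _

lemma frobNorm_sq (X : Matrix (Fin a) (Fin b) ℝ) : frobNorm X ^ 2 = frobInner X X := by
  rw [frobNorm_eq, Real.sq_sqrt (frobInner_self_nonneg X)]

lemma frobInner_comm (X Y : Matrix (Fin a) (Fin b) ℝ) : frobInner X Y = frobInner Y X := by
  unfold frobInner; congr 1; ext i; congr 1; ext j; ring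

lemma frobInner_add_left (X Y Z : Matrix (Fin a) (Fin b) ℝ) :
    frobInner (X + Y) Z = frobInner X Z + frobInner Y Z := by
  unfold frobInner
  rw [← Finset.sum_add_distrib]
  congr 1; ext i
  rw [← Finset.sum_add_distrib]
  congr 1; ext j
  simp [Matrix.add_apply]; ring

lemma frobInner_sub_left (X Y Z : Matrix (Fin a) (Fin b) ℝ) :
    frobInner (X - Y) Z = frobInner X Z - frobInner Y Z := by
  unfold frobInner
  rw [← Finset.sum_sub_distrib]
  congr 1; ext i
  rw [← Finset.sum_sub_distrib]
  congr 1; ext j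
  simp [Matrix.sub_apply]; ring

lemma frobInner_sub_right (X Y Z : Matrix (Fin a) (Fin b) ℝ) :
    frobInner X (Y - Z) = frobInner X Y - frobInner X Z := by
  rw [frobInner_comm, frobInner_sub_left, frobInner_comm Y X, frobInner_comm Z X]

lemma frobInner_add_right (X Y Z : Matrix (Fin a) (Fin b) ℝ) :
    frobInner X (Y + Z) = frobInner X Y + frobInner X Z := by
  rw [frobInner_comm, frobInner_add_left, frobInner_comm Y X, frobInner_comm Z X]

lemma frobInner_smul_left (r : ℝ) (X Y : Matrix (Fin a) (Fin b) ℝ) :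
    frobInner (r • X) Y = r * frobInner X Y := by
  unfold frobInner
  rw [Finset.mul_sum]
  congr 1; ext i
  rw [Finset.mul_sum]
  congr 1; ext j
  simp [Matrix.smul_apply]; ring

lemma frobInner_smul_right (r : ℝ) (X Y : Matrix (Fin a) (Fin b) ℝ) :
    frobInner X (r • Y) = r * frobInner X Y := by
  rw [frobInner_comm, frobInner_smul_left, frobInner_comm]

lemma frobInner_sum_left {m : ℕ} (f : Fin m → Matrix (Fin a) (Fin b) ℝ)
    (Y : Matrix (Fin a) (Fin b) ℝ) :
    frobInner (∑ i, f i) Y = ∑ i, frobInner (f i) Y := by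
  unfold frobInner
  simp only [Matrix.sum_apply, Finset.sum_mul]
  have h1 : ∀ i : Fin a, (∑ j : Fin b, ∑ l : Fin m, f l i j * Y i j)
      = ∑ l : Fin m, ∑ j : Fin b, f l i j * Y i j := fun i => by
    exact Finset.sum_comm
  simp only [h1]
  exact Finset.sum_comm

lemma frobNorm_smul (r : ℝ) (X : Matrix (Fin a) (Fin b) ℝ) :
    frobNorm (r • X) = |r| * frobNorm X := by
  unfold frobNorm
  rw [← Real.sqrt_sq_eq_abs, ← Real.sqrt_mul (sq_nonneg r)]
  congr 1
  rw [Finset.mul_sum]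
  congr 1; ext i
  rw [Finset.mul_sum]
  congr 1; ext j
  simp [Matrix.smul_apply]; ring

lemma frobInner_le_norm (X Y : Matrix (Fin a) (Fin b) ℝ) :
    frobInner X Y ≤ frobNorm X * frobNorm Y := by
  have h1 := prodSum (fun i j => X i j * Y i j)
  have h2 := prodSum (fun i j => (X i j) ^ 2)
  have h3 := prodSum (fun i j => (Y i j) ^ 2)
  rw [frobInner, frobNorm, frobNorm, ← h1, ← h2, ← h3]
  exact Real.sum_mul_le_sqrt_mul_sqrt _ _ _

lemma abs_frobInner_le (X Y : Matrix (Fin a) (Fin b) ℝ) :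
    |frobInner X Y| ≤ frobNorm X * frobNorm Y := by
  rcases abs_cases (frobInner X Y) with ⟨h, _⟩ | ⟨h, _⟩
  · rw [h]; exact frobInner_le_norm X Y
  · rw [h]
    have := frobInner_le_norm X ((-1 : ℝ) • Y)
    rw [frobInner_smul_right, frobNorm_smul] at this
    simpa using this

lemma my_sq_le {x y : ℝ} (hy : 0 ≤ y) (h : x ^ 2 ≤ y ^ 2) (hx : 0 ≤ x) : x ≤ y := by
  nlinarith

lemma frobNorm_triangle (X Y : Matrix (Fin a) (Fin b) ℝ) :
    frobNorm (X + Y) ≤ frobNorm X + frobNorm Y := by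
  refine my_sq_le (add_nonneg (frobNorm_nonneg X) (frobNorm_nonneg Y)) ?_ (frobNorm_nonneg _)
  rw [frobNorm_sq, frobInner_add_left, frobInner_add_right, frobInner_add_right,
    ← frobNorm_sq X, ← frobNorm_sq Y, frobInner_comm Y X]
  nlinarith [abs_frobInner_le X Y, le_abs_self (frobInner X Y)]

lemma frobNorm_sub_comm (X Y : Matrix (Fin a) (Fin b) ℝ) :
    frobNorm (X - Y) = frobNorm (Y - X) := by
  unfold frobNorm
  congr 1
  congr 1; ext i
  congr 1; ext j
  simp [Matrix.sub_apply]; ring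

lemma frobInner_eq_sum_col (X Y : Matrix (Fin a) (Fin b) ℝ) :
    frobInner X Y = ∑ j, ∑ i, X i j * Y i j := Finset.sum_comm

lemma frobNorm_le_frobNorm_iff (X Y : Matrix (Fin a) (Fin b) ℝ) :
    frobNorm X ≤ frobNorm Y ↔ frobInner X X ≤ frobInner Y Y := by
  rw [frobNorm_eq, frobNorm_eq]
  exact Real.sqrt_le_sqrt_iff (frobInner_self_nonneg Y)

/-! ### Adjoint identities -/

lemma sumInner_eq_trace (X Y : Matrix (Fin a) (Fin b) ℝ) :
    (∑ i, ∑ j, X i j * Y i j) = Matrix.trace (Xᵀ * Y) := by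
  unfold Matrix.trace
  simp only [Matrix.diag_apply, Matrix.mul_apply, Matrix.transpose_apply]
  exact Finset.sum_comm

lemma frobInner_transpose_mul (A : Matrix (Fin p) (Fin n) ℝ)
    (M : Matrix (Fin p) (Fin k) ℝ) (N : Matrix (Fin n) (Fin k) ℝ) :
    frobInner (Aᵀ * M) N = frobInner M (A * N) := by
  unfold frobInner
  rw [sumInner_eq_trace, sumInner_eq_trace]
  rw [Matrix.transpose_mul, Matrix.transpose_transpose, Matrix.mul_assoc]

lemma frobInner_mul_transpose (M : Matrix (Fin a) (Fin p) ℝ)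
    (C : Matrix (Fin p) (Fin b) ℝ) (N : Matrix (Fin a) (Fin b) ℝ) :
    frobInner (M * C) N = frobInner M (N * Cᵀ) := by
  unfold frobInner
  rw [sumInner_eq_trace, sumInner_eq_trace]
  rw [Matrix.transpose_mul, Matrix.mul_assoc, Matrix.trace_mul_comm, Matrix.mul_assoc]

lemma mul_col_mulVec (B : Matrix (Fin p) (Fin n) ℝ) (D : Matrix (Fin n) (Fin k) ℝ)
    (i : Fin p) (l : Fin k) : (B * D) i l = B.mulVec (fun t => D t l) i := by
  simp [Matrix.mul_apply, Matrix.mulVec, dotProduct]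

lemma mul_transpose_row_mulVec (E : Matrix (Fin a) (Fin n) ℝ) (C : Matrix (Fin p) (Fin n) ℝ)
    (i : Fin a) (l : Fin p) : (E * Cᵀ) i l = C.mulVec (E i) l := by
  simp [Matrix.mul_apply, Matrix.mulVec, dotProduct, Matrix.transpose_apply, mul_comm]

/-! ### Rank lemmas -/

lemma matRank_add_le {q : ℕ} (A B : Matrix (Fin p) (Fin q) ℝ) :
    (A + B).rank ≤ A.rank + B.rank := by
  classical
  unfold Matrix.rank
  rw [Matrix.mulVecLin_add]
  have h : LinearMap.range (A.mulVecLin + B.mulVecLin) ≤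
      LinearMap.range A.mulVecLin ⊔ LinearMap.range B.mulVecLin := by
    rintro x ⟨v, rfl⟩
    exact Submodule.mem_sup.2 ⟨A.mulVecLin v, ⟨v, rfl⟩, B.mulVecLin v, ⟨v, rfl⟩, rfl⟩
  exact (Submodule.finrank_mono h).trans
    (Submodule.finrank_add_le_finrank_add_finrank _ _)

lemma matRank_smul_le {q : ℕ} (c : ℝ) (A : Matrix (Fin p) (Fin q) ℝ) :
    (c • A).rank ≤ A.rank := by
  classical
  unfold Matrix.rank
  apply Submodule.finrank_mono
  rintro x ⟨v, rfl⟩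
  exact ⟨c • v, by simp [Matrix.mulVecLin_apply, Matrix.smul_mulVec, Matrix.mulVec_smul]⟩

/-! ### Sign lemmas -/

lemma abs_sgn (x : ℝ) : |sgn x| = 1 := by
  unfold sgn; split <;> norm_num

lemma sgn_mul_pos {c : ℝ} (hc : 0 < c) (x : ℝ) : sgn (c * x) * x = |x| := by
  unfold sgn
  rcases lt_trichotomy x 0 with hx | hx | hx
  · rw [if_pos (mul_neg_of_pos_of_neg hc hx), abs_of_neg hx]; ring
  · simp [hx]
  · rw [if_neg (not_lt.2 (le_of_lt (mul_pos hc hx))), abs_of_pos hx]; ring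

/-! ### RIP lemmas -/

lemma sum_sq_add (u v : Fin p → ℝ) :
    ∑ i, (u i + v i) ^ 2 = (∑ i, u i ^ 2) + 2 * (∑ i, u i * v i) + ∑ i, v i ^ 2 := by
  have h : ∀ i : Fin p, (u i + v i) ^ 2 = u i ^ 2 + 2 * (u i * v i) + v i ^ 2 :=
    fun i => by ring
  simp only [h, Finset.sum_add_distrib, Finset.mul_sum]

lemma sum_sq_sub (u v : Fin p → ℝ) :
    ∑ i, (u i - v i) ^ 2 = (∑ i, u i ^ 2) - 2 * (∑ i, u i * v i) + ∑ i, v i ^ 2 := by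
  have h : ∀ i : Fin p, (u i - v i) ^ 2 = u i ^ 2 - 2 * (u i * v i) + v i ^ 2 :=
    fun i => by ring
  simp only [h, Finset.sum_add_distrib, Finset.sum_sub_distrib, Finset.mul_sum]

lemma rip_polar_half {s : ℕ} {δ : ℝ} {B : Matrix (Fin p) (Fin n) ℝ} (h : RIP s δ B)
    {x z : Fin n → ℝ} {S : Finset (Fin n)} (hS : S.card ≤ s)
    (hx : ∀ i, x i ≠ 0 → i ∈ S) (hz : ∀ i, z i ≠ 0 → i ∈ S) :
    |(∑ i, B.mulVec x i * B.mulVec z i) - ∑ i, x i * z i|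
      ≤ (δ / 2) * ((∑ i, x i ^ 2) + ∑ i, z i ^ 2) := by
  have hadd : SparseVec s (x + z) := by
    refine ⟨S, hS, fun i hi => ?_⟩
    by_contra hmem
    simp only [Pi.add_apply] at hi
    have hx0 : x i = 0 := by by_contra h0; exact hmem (hx i h0)
    have hz0 : z i = 0 := by by_contra h0; exact hmem (hz i h0)
    exact hi (by rw [hx0, hz0, add_zero])
  have hsub : SparseVec s (x - z) := by
    refine ⟨S, hS, fun i hi => ?_⟩
    by_contra hmem
    simp only [Pi.sub_apply] at hi
    have hx0 : x i = 0 := by by_contra h0; exact hmem (hx i h0)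
    have hz0 : z i = 0 := by by_contra h0; exact hmem (hz i h0)
    exact hi (by rw [hx0, hz0, sub_zero])
  have h1 := h (x + z) hadd
  have h2 := h (x - z) hsub
  rw [Matrix.mulVec_add] at h1
  rw [Matrix.mulVec_sub] at h2
  have e1 : ∑ i, ((B.mulVec x + B.mulVec z) i) ^ 2
      = (∑ i, B.mulVec x i ^ 2) + 2 * (∑ i, B.mulVec x i * B.mulVec z i)
        + ∑ i, B.mulVec z i ^ 2 := by
    simpa using sum_sq_add (B.mulVec x) (B.mulVec z)
  have e2 : ∑ i, ((B.mulVec x - B.mulVec z) i) ^ 2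
      = (∑ i, B.mulVec x i ^ 2) - 2 * (∑ i, B.mulVec x i * B.mulVec z i)
        + ∑ i, B.mulVec z i ^ 2 := by
    simpa using sum_sq_sub (B.mulVec x) (B.mulVec z)
  have e3 : ∑ i, ((x + z) i) ^ 2 = (∑ i, x i ^ 2) + 2 * (∑ i, x i * z i) + ∑ i, z i ^ 2 := by
    simpa using sum_sq_add x z
  have e4 : ∑ i, ((x - z) i) ^ 2 = (∑ i, x i ^ 2) - 2 * (∑ i, x i * z i) + ∑ i, z i ^ 2 := by
    simpa using sum_sq_sub x z
  rw [e1, e3] at h1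
  rw [e2, e4] at h2
  rw [abs_le]
  constructor <;> nlinarith [h1.1, h1.2, h2.1, h2.2]

lemma rip_polar {s : ℕ} {δ : ℝ} {B : Matrix (Fin p) (Fin n) ℝ} (h : RIP s δ B) (hδ : 0 ≤ δ)
    {x z : Fin n → ℝ} {S : Finset (Fin n)} (hS : S.card ≤ s)
    (hx : ∀ i, x i ≠ 0 → i ∈ S) (hz : ∀ i, z i ≠ 0 → i ∈ S) :
    |(∑ i, B.mulVec x i * B.mulVec z i) - ∑ i, x i * z i|
      ≤ δ * Real.sqrt (∑ i, x i ^ 2) * Real.sqrt (∑ i, z i ^ 2) := by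
  by_cases hx0 : ∑ i, x i ^ 2 = 0
  · have hx' : ∀ i, x i = 0 := by
      intro i
      have := (Finset.sum_eq_zero_iff_of_nonneg (fun i _ => sq_nonneg (x i))).1 hx0 i
        (Finset.mem_univ i)
      exact pow_eq_zero_iff (two_ne_zero) |>.1 this
    have hxe : x = 0 := funext hx'
    subst hxe
    simp [Matrix.mulVec_zero]
  by_cases hz0 : ∑ i, z i ^ 2 = 0
  · have hz' : ∀ i, z i = 0 := by
      intro i
      have := (Finset.sum_eq_zero_iff_of_nonneg (fun i _ => sq_nonneg (z i))).1 hz0 i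
        (Finset.mem_univ i)
      exact pow_eq_zero_iff (two_ne_zero) |>.1 this
    have hze : z = 0 := funext hz'
    subst hze
    simp [Matrix.mulVec_zero]
  have hxpos : 0 < ∑ i, x i ^ 2 :=
    lt_of_le_of_ne (Finset.sum_nonneg fun i _ => sq_nonneg _) (Ne.symm hx0)
  have hzpos : 0 < ∑ i, z i ^ 2 :=
    lt_of_le_of_ne (Finset.sum_nonneg fun i _ => sq_nonneg _) (Ne.symm hz0)
  have hApos : 0 < Real.sqrt (∑ i, x i ^ 2) := Real.sqrt_pos.2 hxpos
  have hBpos : 0 < Real.sqrt (∑ i, z i ^ 2) := Real.sqrt_pos.2 hzpos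
  have hAsq : Real.sqrt (∑ i, x i ^ 2) ^ 2 = ∑ i, x i ^ 2 := Real.sq_sqrt hxpos.le
  have hBsq : Real.sqrt (∑ i, z i ^ 2) ^ 2 = ∑ i, z i ^ 2 := Real.sq_sqrt hzpos.le
  set c : ℝ := Real.sqrt (∑ i, x i ^ 2) / Real.sqrt (∑ i, z i ^ 2) with hc
  have hcpos : 0 < c := div_pos hApos hBpos
  have hw : ∀ i, (c • z) i ≠ 0 → i ∈ S := fun i hi => by
    apply hz
    intro h0
    exact hi (by simp [h0])
  have half := rip_polar_half h hS hx hw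
  rw [Matrix.mulVec_smul] at half
  have ew1 : ∑ i, B.mulVec x i * (c • B.mulVec z) i
      = c * ∑ i, B.mulVec x i * B.mulVec z i := by
    rw [Finset.mul_sum]; exact Finset.sum_congr rfl fun i _ => by simp [Pi.smul_apply]; ring
  have ew2 : ∑ i, x i * (c • z) i = c * ∑ i, x i * z i := by
    rw [Finset.mul_sum]; exact Finset.sum_congr rfl fun i _ => by simp [Pi.smul_apply]; ring
  have ew3 : ∑ i, ((c • z) i) ^ 2 = c ^ 2 * ∑ i, z i ^ 2 := by
    rw [Finset.mul_sum]; exact Finset.sum_congr rfl fun i _ => by simp [Pi.smul_apply]; ring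
  rw [ew1, ew2, ew3] at half
  have habs : |c * (∑ i, B.mulVec x i * B.mulVec z i) - c * ∑ i, x i * z i|
      = c * |(∑ i, B.mulVec x i * B.mulVec z i) - ∑ i, x i * z i| := by
    rw [← mul_sub, abs_mul, abs_of_pos hcpos]
  rw [habs] at half
  have hc2 : c ^ 2 * ∑ i, z i ^ 2 = ∑ i, x i ^ 2 := by
    rw [hc, div_pow, hAsq, hBsq]
    field_simp
  rw [hc2] at half
  have hgoal := mul_le_mul_of_nonneg_left half (le_of_lt (inv_pos.2 hcpos))
  rw [← mul_assoc, inv_mul_cancel₀ (ne_of_gt hcpos), one_mul] at hgoal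
  calc |(∑ i, B.mulVec x i * B.mulVec z i) - ∑ i, x i * z i|
      ≤ c⁻¹ * ((δ / 2) * ((∑ i, x i ^ 2) + ∑ i, x i ^ 2)) := hgoal
    _ = δ * Real.sqrt (∑ i, x i ^ 2) * Real.sqrt (∑ i, z i ^ 2) := by
        rw [hc, inv_div, ← hAsq]
        field_simp
        linear_combination (-(δ * 2)) * Real.sq_sqrt (sq_nonneg (Real.sqrt (∑ i, x i ^ 2)))

lemma rip_cols_upper {t : ℕ} {δ : ℝ} {B : Matrix (Fin p) (Fin n) ℝ} (h : RIP t δ B)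
    (D : Matrix (Fin n) (Fin k) ℝ) (hD : ∀ l, SparseVec t (fun i => D i l)) :
    frobInner (B * D) (B * D) ≤ (1 + δ) * frobInner D D := by
  have e1 : frobInner (B * D) (B * D) = ∑ l, ∑ i, (B.mulVec (fun t => D t l) i) ^ 2 := by
    rw [frobInner_self_eq, Finset.sum_comm]
    exact Finset.sum_congr rfl fun l _ => Finset.sum_congr rfl fun i _ => by
      rw [mul_col_mulVec]
  have e2 : frobInner D D = ∑ l, ∑ i, (D i l) ^ 2 := by
    rw [frobInner_self_eq]; exact Finset.sum_comm
  rw [e1, e2, Finset.mul_sum]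
  exact Finset.sum_le_sum fun l _ => (h _ (hD l)).2

lemma rip_cols_lower {t : ℕ} {δ : ℝ} {B : Matrix (Fin p) (Fin n) ℝ} (h : RIP t δ B)
    (D : Matrix (Fin n) (Fin k) ℝ) (hD : ∀ l, SparseVec t (fun i => D i l)) :
    (1 - δ) * frobInner D D ≤ frobInner (B * D) (B * D) := by
  have e1 : frobInner (B * D) (B * D) = ∑ l, ∑ i, (B.mulVec (fun t => D t l) i) ^ 2 := by
    rw [frobInner_self_eq, Finset.sum_comm]
    exact Finset.sum_congr rfl fun l _ => Finset.sum_congr rfl fun i _ => by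
      rw [mul_col_mulVec]
  have e2 : frobInner D D = ∑ l, ∑ i, (D i l) ^ 2 := by
    rw [frobInner_self_eq]; exact Finset.sum_comm
  rw [e1, e2, Finset.mul_sum]
  exact Finset.sum_le_sum fun l _ => (h _ (hD l)).1

lemma rip_rows_upper {t : ℕ} {δ : ℝ} {C : Matrix (Fin p) (Fin n) ℝ} (h : RIP t δ C)
    (E : Matrix (Fin a) (Fin n) ℝ) (hE : ∀ i, SparseVec t (E i)) :
    frobInner (E * Cᵀ) (E * Cᵀ) ≤ (1 + δ) * frobInner E E := by
  have e1 : frobInner (E * Cᵀ) (E * Cᵀ) = ∑ i, ∑ l, (C.mulVec (E i) l) ^ 2 := by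
    rw [frobInner_self_eq]
    exact Finset.sum_congr rfl fun i _ => Finset.sum_congr rfl fun l _ => by
      rw [mul_transpose_row_mulVec]
  rw [e1, frobInner_self_eq, Finset.mul_sum]
  exact Finset.sum_le_sum fun i _ => (h _ (hE i)).2

lemma rip_rows_lower {t : ℕ} {δ : ℝ} {C : Matrix (Fin p) (Fin n) ℝ} (h : RIP t δ C)
    (E : Matrix (Fin a) (Fin n) ℝ) (hE : ∀ i, SparseVec t (E i)) :
    (1 - δ) * frobInner E E ≤ frobInner (E * Cᵀ) (E * Cᵀ) := by
  have e1 : frobInner (E * Cᵀ) (E * Cᵀ) = ∑ i, ∑ l, (C.mulVec (E i) l) ^ 2 := by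
    rw [frobInner_self_eq]
    exact Finset.sum_congr rfl fun i _ => Finset.sum_congr rfl fun l _ => by
      rw [mul_transpose_row_mulVec]
  rw [e1, frobInner_self_eq, Finset.mul_sum]
  exact Finset.sum_le_sum fun i _ => (h _ (hE i)).1

lemma rip_polar_cols {t : ℕ} {δ : ℝ} {B : Matrix (Fin p) (Fin n) ℝ} (h : RIP t δ B)
    (hδ : 0 ≤ δ) (Y D : Matrix (Fin n) (Fin k) ℝ) (S : Finset (Fin n)) (hS : S.card ≤ t)
    (hY : ∀ l i, Y i l ≠ 0 → i ∈ S) (hD : ∀ l i, D i l ≠ 0 → i ∈ S) :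
    frobInner (B * Y) (B * D) - frobInner Y D ≤ δ * frobNorm Y * frobNorm D := by
  have eBY : frobInner (B * Y) (B * D)
      = ∑ l, ∑ i, B.mulVec (fun t => Y t l) i * B.mulVec (fun t => D t l) i := by
    rw [frobInner_eq_sum_col]
    exact Finset.sum_congr rfl fun l _ => Finset.sum_congr rfl fun i _ => by
      rw [mul_col_mulVec, mul_col_mulVec]
  have eYD : frobInner Y D = ∑ l, ∑ i, Y i l * D i l := frobInner_eq_sum_col _ _
  rw [eBY, eYD, ← Finset.sum_sub_distrib]
  have hterm : ∀ l : Fin k, ((∑ i, B.mulVec (fun t => Y t l) i * B.mulVec (fun t => D t l) i)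
      - ∑ i, Y i l * D i l)
      ≤ δ * (Real.sqrt (∑ i, (Y i l) ^ 2) * Real.sqrt (∑ i, (D i l) ^ 2)) := fun l => by
    have := rip_polar h hδ hS (hY l) (hD l)
    have h2 := (le_abs_self _).trans this
    linarith [h2]
  calc (∑ l, ((∑ i, B.mulVec (fun t => Y t l) i * B.mulVec (fun t => D t l) i)
          - ∑ i, Y i l * D i l))
      ≤ ∑ l, δ * (Real.sqrt (∑ i, (Y i l) ^ 2) * Real.sqrt (∑ i, (D i l) ^ 2)) :=
        Finset.sum_le_sum fun l _ => hterm l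
    _ = δ * ∑ l, Real.sqrt (∑ i, (Y i l) ^ 2) * Real.sqrt (∑ i, (D i l) ^ 2) := by
        rw [Finset.mul_sum]
    _ ≤ δ * (Real.sqrt (∑ l, ∑ i, (Y i l) ^ 2) * Real.sqrt (∑ l, ∑ i, (D i l) ^ 2)) := by
        refine mul_le_mul_of_nonneg_left ?_ hδ
        exact Real.sum_sqrt_mul_sqrt_le _ (fun l => Finset.sum_nonneg fun i _ => sq_nonneg _)
          (fun l => Finset.sum_nonneg fun i _ => sq_nonneg _)
    _ = δ * frobNorm Y * frobNorm D := by
        rw [frobNorm_eq, frobNorm_eq, frobInner_self_eq, frobInner_self_eq]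
        rw [Finset.sum_comm (f := fun i l => (Y i l) ^ 2),
          Finset.sum_comm (f := fun i l => (D i l) ^ 2)]
        ring

lemma rip_polar_rows {t : ℕ} {δ : ℝ} {C : Matrix (Fin p) (Fin n) ℝ} (h : RIP t δ C)
    (hδ : 0 ≤ δ) (X E : Matrix (Fin a) (Fin n) ℝ) (T : Finset (Fin n)) (hT : T.card ≤ t)
    (hX : ∀ i j, X i j ≠ 0 → j ∈ T) (hE : ∀ i j, E i j ≠ 0 → j ∈ T) :
    frobInner (X * Cᵀ) (E * Cᵀ) - frobInner X E ≤ δ * frobNorm X * frobNorm E := by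
  have eXC : frobInner (X * Cᵀ) (E * Cᵀ)
      = ∑ i, ∑ l, C.mulVec (X i) l * C.mulVec (E i) l := by
    unfold frobInner
    exact Finset.sum_congr rfl fun i _ => Finset.sum_congr rfl fun l _ => by
      rw [mul_transpose_row_mulVec, mul_transpose_row_mulVec]
  have eXE : frobInner X E = ∑ i, ∑ j, X i j * E i j := rfl
  rw [eXC, eXE, ← Finset.sum_sub_distrib]
  have hterm : ∀ i : Fin a, ((∑ l, C.mulVec (X i) l * C.mulVec (E i) l)
      - ∑ j, X i j * E i j)
      ≤ δ * (Real.sqrt (∑ j, (X i j) ^ 2) * Real.sqrt (∑ j, (E i j) ^ 2)) := fun i => by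
    have := rip_polar h hδ hT (hX i) (hE i)
    have h2 := (le_abs_self _).trans this
    linarith [h2]
  calc (∑ i, ((∑ l, C.mulVec (X i) l * C.mulVec (E i) l) - ∑ j, X i j * E i j))
      ≤ ∑ i, δ * (Real.sqrt (∑ j, (X i j) ^ 2) * Real.sqrt (∑ j, (E i j) ^ 2)) :=
        Finset.sum_le_sum fun i _ => hterm i
    _ = δ * ∑ i, Real.sqrt (∑ j, (X i j) ^ 2) * Real.sqrt (∑ j, (E i j) ^ 2) := by
        rw [Finset.mul_sum]
    _ ≤ δ * (Real.sqrt (∑ i, ∑ j, (X i j) ^ 2) * Real.sqrt (∑ i, ∑ j, (E i j) ^ 2)) := by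
        refine mul_le_mul_of_nonneg_left ?_ hδ
        exact Real.sum_sqrt_mul_sqrt_le _ (fun i => Finset.sum_nonneg fun j _ => sq_nonneg _)
          (fun i => Finset.sum_nonneg fun j _ => sq_nonneg _)
    _ = δ * frobNorm X * frobNorm E := by
        rw [frobNorm_eq, frobNorm_eq, frobInner_self_eq, frobInner_self_eq]
        ring

/-! ### Miscellaneous -/

lemma expand_sub (M W : Matrix (Fin a) (Fin b) ℝ) :
    frobInner (M - W) (M - W) = frobInner M M - 2 * frobInner M W + frobInner W W := by
  simp only [frobInner_sub_left, frobInner_sub_right]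
  rw [frobInner_comm W M]; ring

lemma expand_sub_smul (M W : Matrix (Fin a) (Fin b) ℝ) (t : ℝ) :
    frobInner (M - t • W) (M - t • W)
      = frobInner M M - 2 * t * frobInner M W + t ^ 2 * frobInner W W := by
  simp only [frobInner_sub_left, frobInner_sub_right, frobInner_smul_left,
    frobInner_smul_right]
  rw [frobInner_comm W M]; ring

lemma half_sq (N Y V : Matrix (Fin a) (Fin b) ℝ)
    (h : frobInner (N - V) (N - V) ≤ frobInner (N - Y) (N - Y)) :
    frobInner (V - Y) (V - Y) ≤ 2 * frobInner (N - Y) (V - Y) := by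
  simp only [frobInner_sub_left, frobInner_sub_right] at h ⊢
  have c1 := frobInner_comm N V
  have c2 := frobInner_comm N Y
  have c3 := frobInner_comm Y V
  linarith

lemma step1_key (q μ w d : ℝ) (hd0 : 0 < d) (hd1 : d < 1)
    (hq1 : (1 - d) ^ 2 ≤ q) (hq2 : q ≤ (1 + d) ^ 2) (hm1 : 1 - d ≤ μ) (hm2 : μ ≤ 1 + d)
    (hf4 : (q + μ) ^ 2 ≤ (1 + d) ^ 2 * (q + 2 * w + 1)) :
    q - 2 * w + 1 ≤ 16 * d := by
  have h1 : (0:ℝ) ≤ 1 - d := by linarith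
  have h2 : (0:ℝ) ≤ 2 - d := by linarith
  have h3 : (0:ℝ) ≤ 1 + d := by linarith
  nlinarith [hf4, (by positivity : (0:ℝ) < (1 + d) ^ 2),
    sq_nonneg (q + μ - (1 - d) ^ 2 - (1 - d)),
    sub_nonneg.2 hq1,
    mul_nonneg hd0.le (sub_nonneg.2 hq2),
    mul_nonneg (mul_nonneg (sub_nonneg.2 hm1) h1) h2,
    mul_nonneg (mul_nonneg hd0.le hd0.le) (mul_nonneg h1 h3),
    mul_nonneg (mul_nonneg hd0.le hd0.le) hd0.le]

lemma opt_eq {mm q v : ℝ} (hvpos : 0 < v)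
    (ht : mm - 2 * q + v ≤ mm - 2 * (q / v) * q + (q / v) ^ 2 * v) : q = v := by
  have htv : q / v * v = q := div_mul_cancel₀ q (ne_of_gt hvpos)
  have hA : (q / v) ^ 2 * v = (q / v) * q := by rw [sq, mul_assoc, htv]
  rw [hA] at ht
  have hle : (q / v) * q ≤ 2 * q - v := by linarith
  have hAv : ((q / v) * q) * v = q ^ 2 := by rw [mul_comm (q / v) q, mul_assoc, htv, sq]
  have hkey : (q - v) ^ 2 ≤ 0 := by nlinarith
  have h0 : (q - v) ^ 2 = 0 := le_antisymm hkey (sq_nonneg _)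
  have := pow_eq_zero_iff (two_ne_zero) |>.1 h0
  linarith [sub_eq_zero.1 this]

lemma lin_sq_low {d yY zZ : ℝ} (hd : d < 1) (h1 : 1 - d ≤ yY)
    (h2 : (1 - d) * yY ≤ zZ) : (1 - d) ^ 2 ≤ zZ := by nlinarith

lemma lin_sq_up {d yY zZ : ℝ} (hd : 0 < d) (h1 : yY ≤ 1 + d)
    (h2 : zZ ≤ (1 + d) * yY) : zZ ≤ (1 + d) ^ 2 := by nlinarith

lemma sq_low_of_le {d μ v : ℝ} (hd : d < 1) (h1 : 1 - d ≤ μ) (h2 : μ ^ 2 ≤ v) :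
    (1 - d) ^ 2 ≤ v := by nlinarith

lemma sq_up_of_lin {x d : ℝ} (hx : 0 ≤ x) (hd : 0 < d) (h : x ^ 2 ≤ (1 + d) * x) :
    x ^ 2 ≤ (1 + d) ^ 2 := by nlinarith

lemma one_add_le_four {d x : ℝ} (hd : d < 1) (hx : 0 ≤ x) : (1 + d) * x ≤ 4 * x := by
  nlinarith

lemma le_of_sq_le_mul {x c : ℝ} (hx : 0 ≤ x) (hc : 0 ≤ c) (h : x ^ 2 ≤ c * x) : x ≤ c := by
  rcases eq_or_lt_of_le hx with h0 | h0
  · linarith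
  · nlinarith

end AuxLemmas


/-- Multistep recovery with factorized sensing `A_i = Bᵀ A'_i C`: if `𝒜'` satisfies an ℓ₁
restricted isometry property on rank-`2r` matrices with constant `δ'` and `B, C` satisfy the
RIP of order `2s` with constant `δ`, then any `X ∈ b̃ilr(s,r)` is approximated by
`X' = H^col_(s){H^row_(s)[Bᵀ H^{[r]}(𝒜'*(y))] C}` with `‖X − X'‖_F ≤ C(√δ' + δ)`, where
`y = sgn(𝒜X)`. -/
theorem factorized_sensing_recovery :
    ∃ Cst : ℝ, 0 < Cst ∧ ∀ (n p m s r : ℕ), 1 ≤ r → r ≤ s → 2 * s ≤ n →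
      ∀ δ δ' : ℝ, 0 < δ → δ < 1 → 0 < δ' → δ' < 1 →
      ∀ A' : Fin m → Matrix (Fin p) (Fin p) ℝ,
      (∀ Z : Matrix (Fin p) (Fin p) ℝ, Z.rank ≤ 2 * r →
        (1 - δ') * frobNorm Z ≤ (∑ i, |frobInner (A' i) Z|) ∧
        (∑ i, |frobInner (A' i) Z|) ≤ (1 + δ') * frobNorm Z) →
      ∀ B C : Matrix (Fin p) (Fin n) ℝ, RIP (2 * s) δ B → RIP (2 * s) δ C →
      ∀ X ∈ bilrSphere n s r,
      -- the one-bit measurements `y i = sgn(⟨Bᵀ A'_i C, X⟩_F)`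
      ∀ y : Fin m → ℝ, (∀ i, y i = sgn (frobInner (Bᵀ * A' i * C) X)) →
      -- `W = H^{[r]}(𝒜'*(y))`, a best rank-`r` approximation of `𝒜'*(y) = Σ y_i A'_i`
      ∀ W : Matrix (Fin p) (Fin p) ℝ, W.rank ≤ r →
      (∀ Z : Matrix (Fin p) (Fin p) ℝ, Z.rank ≤ r →
        frobNorm ((∑ i, y i • A' i) - W) ≤ frobNorm ((∑ i, y i • A' i) - Z)) →
      -- `V = H^row_(s)[Bᵀ W]`, a best `s`-row-sparse approximation of `Bᵀ W`
      ∀ V : Matrix (Fin n) (Fin p) ℝ, RowSparse s V →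
      (∀ U : Matrix (Fin n) (Fin p) ℝ, RowSparse s U →
        frobNorm (Bᵀ * W - V) ≤ frobNorm (Bᵀ * W - U)) →
      -- `X' = H^col_(s){V C}`, a best `s`-column-sparse approximation of `V C`
      ∀ X' : Matrix (Fin n) (Fin n) ℝ, ColSparse s X' →
      (∀ U : Matrix (Fin n) (Fin n) ℝ, ColSparse s U →
        frobNorm (V * C - X') ≤ frobNorm (V * C - U)) →
      frobNorm (X - X') ≤ Cst * (Real.sqrt δ' + δ) := by
  refine ⟨1000, by norm_num, ?_⟩
  intro n p m s r hr1 hrs hsn δ δ' hδ0 hδ1 hd'0 hd'1 A' hA' B C hB hC X hX y hy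
    W hWrank hWopt V hVsp hVopt X' hX'sp hX'opt
  obtain ⟨⟨hXrank, S, T, hScard, hTcard, hXsupp⟩, hXnorm⟩ := hX
  obtain ⟨SV, hSVcard, hSVsupp⟩ := hVsp
  obtain ⟨T', hT'card, hT'supp⟩ := hX'sp
  have hsqrtnn : 0 ≤ Real.sqrt δ' := Real.sqrt_nonneg _
  -- ‖X‖ = 1 in inner-product form
  have hXX : frobInner X X = 1 := by
    rw [frobInner_self_eq]
    exact Real.sqrt_eq_one.mp hXnorm
  -- sparsity of rows and columns of X
  have hXrowSp : ∀ i : Fin n, SparseVec (2 * s) (X i) :=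
    fun i => ⟨T, by omega, fun j hj => (hXsupp i j hj).2⟩
  set Y := X * Cᵀ with hYdef
  set Z0 := B * Y with hZ0def
  have hYent : ∀ (i : Fin n) (l : Fin p), Y i l = C.mulVec (X i) l :=
    fun i l => mul_transpose_row_mulVec X C i l
  have hYcol : ∀ (l : Fin p) (i : Fin n), Y i l ≠ 0 → i ∈ S := by
    intro l i hil
    by_contra hmem
    apply hil
    show (X * Cᵀ) i l = 0
    rw [Matrix.mul_apply]
    refine Finset.sum_eq_zero fun j _ => ?_
    have hX0 : X i j = 0 := by
      by_contra h0
      exact hmem (hXsupp i j h0).1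
    rw [hX0, zero_mul]
  -- bounds on ⟨Y, Y⟩
  have hYY : frobInner Y Y = ∑ i, ∑ l, (C.mulVec (X i) l) ^ 2 := by
    rw [frobInner_self_eq]
    exact Finset.sum_congr rfl fun i _ => Finset.sum_congr rfl fun l _ => by rw [hYent]
  have hXsum : ∑ i, ∑ j, (X i j) ^ 2 = 1 := by rw [← frobInner_self_eq, hXX]
  have hYlow : 1 - δ ≤ frobInner Y Y := by
    have := Finset.sum_le_sum (s := Finset.univ)
      (f := fun i : Fin n => (1 - δ) * ∑ j, (X i j) ^ 2)
      (g := fun i : Fin n => ∑ l, (C.mulVec (X i) l) ^ 2)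
      (fun i _ => (hC (X i) (hXrowSp i)).1)
    rw [← Finset.mul_sum, hXsum, mul_one] at this
    rw [hYY]
    exact this
  have hYup : frobInner Y Y ≤ 1 + δ := by
    have := Finset.sum_le_sum (s := Finset.univ)
      (f := fun i : Fin n => ∑ l, (C.mulVec (X i) l) ^ 2)
      (g := fun i : Fin n => (1 + δ) * ∑ j, (X i j) ^ 2)
      (fun i _ => (hC (X i) (hXrowSp i)).2)
    rw [← Finset.mul_sum, hXsum, mul_one] at this
    rw [hYY]
    exact this
  -- bounds on ⟨Z₀, Z₀⟩
  have hYcolSp : ∀ l, SparseVec (2 * s) (fun i => Y i l) :=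
    fun l => ⟨S, by omega, fun i hi => hYcol l i hi⟩
  have hZlow : (1 - δ) * frobInner Y Y ≤ frobInner Z0 Z0 := rip_cols_lower hB Y hYcolSp
  have hZup : frobInner Z0 Z0 ≤ (1 + δ) * frobInner Y Y := rip_cols_upper hB Y hYcolSp
  have hZl2 : (1 - δ) ^ 2 ≤ frobInner Z0 Z0 := lin_sq_low hδ1 hYlow hZlow
  have hZu2 : frobInner Z0 Z0 ≤ (1 + δ) ^ 2 := lin_sq_up hδ0 hYup hZup
  set ρ := frobNorm Z0 with hρdef
  have hρsq : ρ ^ 2 = frobInner Z0 Z0 := frobNorm_sq Z0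
  have hρlow : 1 - δ ≤ ρ := my_sq_le (frobNorm_nonneg Z0) (by rw [hρsq]; exact hZl2) (by linarith)
  have hρup : ρ ≤ 1 + δ := my_sq_le (by linarith) (by rw [hρsq]; exact hZu2) (frobNorm_nonneg Z0)
  have hρpos : 0 < ρ := lt_of_lt_of_le (by linarith) hρlow
  set u := ρ⁻¹ • Z0 with hudef
  have hZρu : Z0 = ρ • u := by
    rw [hudef, smul_smul, mul_inv_cancel₀ (ne_of_gt hρpos), one_smul]
  have hunorm : frobNorm u = 1 := by
    rw [hudef, frobNorm_smul, abs_of_pos (inv_pos.2 hρpos), ← hρdef,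
      inv_mul_cancel₀ (ne_of_gt hρpos)]
  have huu : frobInner u u = 1 := by
    have h := frobNorm_sq u
    rw [hunorm] at h
    simpa using h.symm
  have hurank : u.rank ≤ r := by
    refine le_trans (matRank_smul_le _ _) ?_
    refine le_trans (Matrix.rank_mul_le_right B Y) ?_
    exact le_trans (Matrix.rank_mul_le_left X Cᵀ) hXrank
  set M := ∑ i, y i • A' i with hMdef
  have hipM : ∀ Z : Matrix (Fin p) (Fin p) ℝ,
      frobInner M Z = ∑ i, y i * frobInner (A' i) Z := by
    intro Z
    rw [hMdef, frobInner_sum_left]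
    exact Finset.sum_congr rfl fun i _ => frobInner_smul_left _ _ _
  have hyabs : ∀ i, |y i| = 1 := fun i => by rw [hy i]; exact abs_sgn _
  have hmeas : ∀ i, frobInner (Bᵀ * A' i * C) X = ρ * frobInner (A' i) u := by
    intro i
    have e1 : frobInner (Bᵀ * A' i * C) X = frobInner (Bᵀ * A' i) (X * Cᵀ) :=
      frobInner_mul_transpose (Bᵀ * A' i) C X
    have e2 : frobInner (Bᵀ * A' i) (X * Cᵀ) = frobInner (A' i) (B * (X * Cᵀ)) :=
      frobInner_transpose_mul B (A' i) (X * Cᵀ)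
    rw [e1, e2, ← hYdef, ← hZ0def, hZρu, frobInner_smul_right]
  have hyu : ∀ i, y i * frobInner (A' i) u = |frobInner (A' i) u| := by
    intro i
    rw [hy i, hmeas i]
    exact sgn_mul_pos hρpos _
  have hMu : frobInner M u = ∑ i, |frobInner (A' i) u| := by
    rw [hipM]
    exact Finset.sum_congr rfl fun i _ => hyu i
  have hur2 : u.rank ≤ 2 * r := le_trans hurank (by omega)
  have hAu := hA' u hur2
  rw [hunorm, mul_one, mul_one] at hAu
  have hμ1 : 1 - δ' ≤ frobInner M u := by rw [hMu]; exact hAu.1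
  have hμ2 : frobInner M u ≤ 1 + δ' := by rw [hMu]; exact hAu.2
  have hMbound : ∀ Z : Matrix (Fin p) (Fin p) ℝ, Z.rank ≤ 2 * r →
      frobInner M Z ≤ (1 + δ') * frobNorm Z := by
    intro Z hZ
    rw [hipM]
    calc ∑ i, y i * frobInner (A' i) Z
        ≤ ∑ i, |y i * frobInner (A' i) Z| := Finset.sum_le_sum fun i _ => le_abs_self _
      _ = ∑ i, |frobInner (A' i) Z| := Finset.sum_congr rfl fun i _ => by
          rw [abs_mul, hyabs i, one_mul]
      _ ≤ (1 + δ') * frobNorm Z := (hA' Z hZ).2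
  -- variational properties of W
  have hWle : ∀ Z : Matrix (Fin p) (Fin p) ℝ, Z.rank ≤ r →
      frobInner (M - W) (M - W) ≤ frobInner (M - Z) (M - Z) :=
    fun Z hZ => (frobNorm_le_frobNorm_iff _ _).1 (hWopt Z hZ)
  have hWr2 : W.rank ≤ 2 * r := le_trans hWrank (by omega)
  -- f1 : ⟨M, W⟩ = ⟨W, W⟩
  have hf1 : frobInner M W = frobInner W W := by
    have hWWnn := frobInner_self_nonneg W
    rcases eq_or_lt_of_le hWWnn with hWW0 | hWWpos
    · have hnW : frobNorm W = 0 := by rw [frobNorm_eq, ← hWW0, Real.sqrt_zero]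
      have habs := abs_frobInner_le M W
      rw [hnW, mul_zero] at habs
      have h0 : frobInner M W = 0 := abs_nonpos_iff.mp habs
      rw [h0, ← hWW0]
    · have ht := hWle ((frobInner M W / frobInner W W) • W)
        (le_trans (matRank_smul_le _ _) hWrank)
      rw [expand_sub, expand_sub_smul] at ht
      exact opt_eq hWWpos ht
  -- f2 : μ² ≤ ⟨W, W⟩
  have hf2 : (frobInner M u) ^ 2 ≤ frobInner W W := by
    have ht := hWle ((frobInner M u) • u) (le_trans (matRank_smul_le _ _) hurank)
    rw [expand_sub, expand_sub_smul, huu, mul_one] at ht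
    linarith [ht, hf1]
  -- bounds on ⟨W,W⟩
  have hq1 : (1 - δ') ^ 2 ≤ frobInner W W := sq_low_of_le hd'1 hμ1 hf2
  have hq2 : frobInner W W ≤ (1 + δ') ^ 2 := by
    have hb := hMbound W hWr2
    rw [hf1] at hb
    have hWnn := frobNorm_nonneg W
    have hWsq := frobNorm_sq W
    rw [← hWsq] at hb ⊢
    exact sq_up_of_lin hWnn hd'0 hb
  -- f4
  have hrWu : (W + u).rank ≤ 2 * r := by
    refine le_trans (matRank_add_le W u) ?_
    calc W.rank + u.rank ≤ r + r := add_le_add hWrank hurank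
      _ = 2 * r := (two_mul r).symm
  have hbWu := hMbound (W + u) hrWu
  have hMWu : frobInner M (W + u) = frobInner W W + frobInner M u := by
    rw [frobInner_add_right, hf1]
  have hWusq : frobNorm (W + u) ^ 2 = frobInner W W + 2 * frobInner W u + 1 := by
    rw [frobNorm_sq, frobInner_add_left, frobInner_add_right, frobInner_add_right,
      frobInner_comm u W, huu]
    ring
  have hf4 : (frobInner W W + frobInner M u) ^ 2
      ≤ (1 + δ') ^ 2 * (frobInner W W + 2 * frobInner W u + 1) := by
    have hLnn : 0 ≤ frobInner W W + frobInner M u := by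
      have := frobInner_self_nonneg W
      linarith
    have hRnn : 0 ≤ frobNorm (W + u) := frobNorm_nonneg _
    rw [hMWu] at hbWu
    calc (frobInner W W + frobInner M u) ^ 2
        ≤ ((1 + δ') * frobNorm (W + u)) ^ 2 := by
          apply pow_le_pow_left₀ hLnn hbWu
      _ = (1 + δ') ^ 2 * (frobNorm (W + u)) ^ 2 := by ring
      _ = (1 + δ') ^ 2 * (frobInner W W + 2 * frobInner W u + 1) := by rw [hWusq]
  have hkey1 : frobInner W W - 2 * frobInner W u + 1 ≤ 16 * δ' :=
    step1_key (frobInner W W) (frobInner M u) (frobInner W u) δ' hd'0 hd'1 hq1 hq2 hμ1 hμ2 hf4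
  have he2 : frobInner (W - u) (W - u) = frobInner W W - 2 * frobInner W u + 1 := by
    simp only [frobInner_sub_left, frobInner_sub_right]
    rw [frobInner_comm u W, huu]
    ring
  have heW : frobNorm (W - u) ≤ 4 * Real.sqrt δ' := by
    rw [frobNorm_eq]
    calc Real.sqrt (frobInner (W - u) (W - u)) ≤ Real.sqrt (16 * δ') := by
          apply Real.sqrt_le_sqrt
          rw [he2]
          exact hkey1
      _ = 4 * Real.sqrt δ' := by
          rw [show (16 : ℝ) * δ' = 4 ^ 2 * δ' by norm_num,
            Real.sqrt_mul (by positivity), Real.sqrt_sq (by norm_num)]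
  -- the key step-1 estimate
  have ht1 : frobNorm (W - Z0) ≤ 4 * Real.sqrt δ' + δ := by
    have hsplit : W - Z0 = (W - u) + (u - Z0) := by abel
    rw [hsplit]
    refine le_trans (frobNorm_triangle _ _) ?_
    have huZ : u - Z0 = (1 - ρ) • u := by
      rw [hZρu, sub_smul, one_smul]
    rw [huZ, frobNorm_smul, hunorm, mul_one]
    have habsρ : |1 - ρ| ≤ δ := abs_le.2 ⟨by linarith, by linarith⟩
    linarith
  have ht1nn : 0 ≤ 4 * Real.sqrt δ' + δ := by positivity
  -- ### Step 2
  set N := Bᵀ * W with hNdef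
  set D := V - Y with hDdef
  have hYrowsp : RowSparse s Y := ⟨S, le_of_eq hScard, fun i hi => by
    obtain ⟨l, hil⟩ := hi
    exact hYcol l i hil⟩
  have h2a : frobInner (N - V) (N - V) ≤ frobInner (N - Y) (N - Y) :=
    (frobNorm_le_frobNorm_iff _ _).1 (hVopt Y hYrowsp)
  have h2b : frobInner D D ≤ 2 * frobInner (N - Y) D := half_sq N Y V h2a
  -- column sparsity of D
  have hDcol : ∀ (l : Fin p) (i : Fin n), D i l ≠ 0 → i ∈ SV ∪ S := by
    intro l i hil
    rw [hDdef] at hil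
    by_cases hV0 : V i l = 0
    · have : Y i l ≠ 0 := by
        intro h0
        apply hil
        show V i l - Y i l = 0
        rw [hV0, h0, sub_zero]
      exact Finset.mem_union_right _ (hYcol l i this)
    · exact Finset.mem_union_left _ (hSVsupp i ⟨l, hV0⟩)
  have hDcolSp : ∀ l, SparseVec (2 * s) (fun i => D i l) := fun l =>
    ⟨SV ∪ S, le_trans (Finset.card_union_le _ _) (by omega), fun i hi => hDcol l i hi⟩
  -- ‖B D‖ ≤ 2 ‖D‖
  have hBD : frobNorm (B * D) ≤ 2 * frobNorm D := by
    refine my_sq_le (mul_nonneg (by norm_num) (frobNorm_nonneg _)) ?_ (frobNorm_nonneg _)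
    have := rip_cols_upper hB D hDcolSp
    have hDnn := frobInner_self_nonneg D
    rw [frobNorm_sq]
    calc frobInner (B * D) (B * D) ≤ (1 + δ) * frobInner D D := this
      _ ≤ 4 * frobInner D D := one_add_le_four hδ1 hDnn
      _ = (2 * frobNorm D) ^ 2 := by rw [mul_pow, frobNorm_sq]; norm_num
  -- ‖Y‖ ≤ 2
  have hYnorm2 : frobNorm Y ≤ 2 := by
    refine my_sq_le (by norm_num) ?_ (frobNorm_nonneg _)
    rw [frobNorm_sq]
    have : (2:ℝ)^2 = 4 := by norm_num
    rw [this]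
    linarith [hYup, hδ1]
  -- decomposition of ⟨N - Y, D⟩
  have hNY : frobInner (N - Y) D
      = frobInner (W - Z0) (B * D) + (frobInner Z0 (B * D) - frobInner Y D) := by
    have hsplit : N - Y = Bᵀ * (W - Z0) + (Bᵀ * Z0 - Y) := by
      rw [hNdef, Matrix.mul_sub]
      abel
    rw [hsplit, frobInner_add_left, frobInner_sub_left,
      frobInner_transpose_mul B (W - Z0) D, frobInner_transpose_mul B Z0 D]
  have hb1 : frobInner (W - Z0) (B * D) ≤ (4 * Real.sqrt δ' + δ) * (2 * frobNorm D) := by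
    calc frobInner (W - Z0) (B * D) ≤ frobNorm (W - Z0) * frobNorm (B * D) :=
          frobInner_le_norm _ _
      _ ≤ (4 * Real.sqrt δ' + δ) * (2 * frobNorm D) :=
          mul_le_mul ht1 hBD (frobNorm_nonneg _) ht1nn
  have hb2 : frobInner Z0 (B * D) - frobInner Y D ≤ δ * (2 * frobNorm D) := by
    have hpol := rip_polar_cols hB (le_of_lt hδ0) Y D (SV ∪ S)
      (le_trans (Finset.card_union_le _ _) (by omega))
      (fun l i hi => Finset.mem_union_right _ (hYcol l i hi))
      (fun l i hi => hDcol l i hi)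
    rw [← hZ0def] at hpol
    calc frobInner Z0 (B * D) - frobInner Y D ≤ δ * frobNorm Y * frobNorm D := hpol
      _ ≤ δ * (2 * frobNorm D) := by
          rw [mul_assoc]
          refine mul_le_mul_of_nonneg_left ?_ (le_of_lt hδ0)
          exact mul_le_mul_of_nonneg_right hYnorm2 (frobNorm_nonneg _)
  have hDbound : frobNorm D ≤ 4 * (4 * Real.sqrt δ' + δ) + 4 * δ := by
    have hsq : frobNorm D ^ 2 ≤ (4 * (4 * Real.sqrt δ' + δ) + 4 * δ) * frobNorm D := by
      rw [frobNorm_sq]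
      calc frobInner D D ≤ 2 * frobInner (N - Y) D := h2b
        _ ≤ 2 * ((4 * Real.sqrt δ' + δ) * (2 * frobNorm D) + δ * (2 * frobNorm D)) := by
            rw [hNY]
            linarith [hb1, hb2]
        _ = (4 * (4 * Real.sqrt δ' + δ) + 4 * δ) * frobNorm D := by ring
    exact le_of_sq_le_mul (frobNorm_nonneg _) (by positivity) hsq
  have hDnn2 : 0 ≤ 4 * (4 * Real.sqrt δ' + δ) + 4 * δ := by positivity
  -- ### Step 3
  set P := V * C with hPdef
  set E := X' - X with hEdef
  have hXcolsp : ColSparse s X := ⟨T, le_of_eq hTcard, fun j hj => by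
    obtain ⟨i, hij⟩ := hj
    exact (hXsupp i j hij).2⟩
  have h3a : frobInner (P - X') (P - X') ≤ frobInner (P - X) (P - X) :=
    (frobNorm_le_frobNorm_iff _ _).1 (hX'opt X hXcolsp)
  have h3b : frobInner E E ≤ 2 * frobInner (P - X) E := half_sq P X X' h3a
  -- row sparsity of E
  have hErow : ∀ (i : Fin n) (j : Fin n), E i j ≠ 0 → j ∈ T' ∪ T := by
    intro i j hij
    rw [hEdef] at hij
    by_cases hX'0 : X' i j = 0
    · have : X i j ≠ 0 := by
        intro h0
        apply hij
        show X' i j - X i j = 0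
        rw [hX'0, h0, sub_zero]
      exact Finset.mem_union_right _ (hXsupp i j this).2
    · exact Finset.mem_union_left _ (hT'supp j ⟨i, hX'0⟩)
  have hErowSp : ∀ i, SparseVec (2 * s) (E i) := fun i =>
    ⟨T' ∪ T, le_trans (Finset.card_union_le _ _) (by omega), fun j hj => hErow i j hj⟩
  -- ‖E Cᵀ‖ ≤ 2 ‖E‖
  have hECt : frobNorm (E * Cᵀ) ≤ 2 * frobNorm E := by
    refine my_sq_le (mul_nonneg (by norm_num) (frobNorm_nonneg _)) ?_ (frobNorm_nonneg _)
    have := rip_rows_upper hC E hErowSp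
    have hEnn := frobInner_self_nonneg E
    rw [frobNorm_sq]
    calc frobInner (E * Cᵀ) (E * Cᵀ) ≤ (1 + δ) * frobInner E E := this
      _ ≤ 4 * frobInner E E := one_add_le_four hδ1 hEnn
      _ = (2 * frobNorm E) ^ 2 := by rw [mul_pow, frobNorm_sq]; norm_num
  -- decomposition of ⟨P - X, E⟩
  have hPX : frobInner (P - X) E
      = frobInner D (E * Cᵀ) + (frobInner Y (E * Cᵀ) - frobInner X E) := by
    have hsplit : P - X = D * C + (Y * C - X) := by
      rw [hPdef, hDdef, Matrix.sub_mul]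
      abel
    rw [hsplit, frobInner_add_left, frobInner_sub_left,
      frobInner_mul_transpose D C E, frobInner_mul_transpose Y C E]
  have hb3 : frobInner D (E * Cᵀ)
      ≤ (4 * (4 * Real.sqrt δ' + δ) + 4 * δ) * (2 * frobNorm E) := by
    calc frobInner D (E * Cᵀ) ≤ frobNorm D * frobNorm (E * Cᵀ) := frobInner_le_norm _ _
      _ ≤ (4 * (4 * Real.sqrt δ' + δ) + 4 * δ) * (2 * frobNorm E) :=
          mul_le_mul hDbound hECt (frobNorm_nonneg _) hDnn2
  have hb4 : frobInner Y (E * Cᵀ) - frobInner X E ≤ δ * frobNorm E := by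
    have hpol := rip_polar_rows hC (le_of_lt hδ0) X E (T' ∪ T)
      (le_trans (Finset.card_union_le _ _) (by omega))
      (fun i j hij => Finset.mem_union_right _ (hXsupp i j hij).2)
      (fun i j hij => hErow i j hij)
    rw [← hYdef, hXnorm, mul_one] at hpol
    exact hpol
  have hEbound : frobNorm E
      ≤ 4 * ((4 * (4 * Real.sqrt δ' + δ) + 4 * δ)) + 2 * δ := by
    have hsq : frobNorm E ^ 2
        ≤ (4 * ((4 * (4 * Real.sqrt δ' + δ) + 4 * δ)) + 2 * δ) * frobNorm E := by
      rw [frobNorm_sq]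
      calc frobInner E E ≤ 2 * frobInner (P - X) E := h3b
        _ ≤ 2 * ((4 * (4 * Real.sqrt δ' + δ) + 4 * δ) * (2 * frobNorm E)
              + δ * frobNorm E) := by
            rw [hPX]
            linarith [hb3, hb4]
        _ = (4 * ((4 * (4 * Real.sqrt δ' + δ) + 4 * δ)) + 2 * δ) * frobNorm E := by ring
    exact le_of_sq_le_mul (frobNorm_nonneg _) (by positivity) hsq
  -- conclusion
  have hfinal : frobNorm (X - X') = frobNorm E := by
    rw [hEdef]
    exact frobNorm_sub_comm X X'
  rw [hfinal]
  calc frobNorm E ≤ 4 * ((4 * (4 * Real.sqrt δ' + δ) + 4 * δ)) + 2 * δ := hEbound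
    _ = 64 * Real.sqrt δ' + 34 * δ := by ring
    _ ≤ 1000 * (Real.sqrt δ' + δ) := by linarith [hsqrtnn, hδ0]

end
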